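/- X̄(λ, μ, f) = (λ/μ)·(r−f')(f'−f)/(λ(r−f') + μ(r−f)) is strictly convex in λ on the interval of λ > 0 where λ(r−f') + μ(r−f) < 0: its second partial derivative with respect to λ is strictly positive. -/

import Mathlib

/-!
As a function of λ, X̄ is the linear-fractional map λ ↦ λc / (λa + b) with a = r - f',
b = μ(r - f), c = (r - f')(f' - f)/μ, whose second derivative is -2abc / (λa + b)³.
Here abc = (r - f')²(r - f)(f' - f) > 0, and λa + b < 0 on the stable region.
-/

open Topology

section LinearFractional

variable {𝕜 : Type*} [NontriviallyNormedField 𝕜] {a b c x : 𝕜}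

theorem hasDerivAt_mul_div_linear (hx : x * a + b ≠ 0) :
    HasDerivAt (fun y => y * c / (y * a + b)) (b * c / (x * a + b) ^ 2) x := by
  have hden : HasDerivAt (fun y => y * a + b) a x := by
    simpa using ((hasDerivAt_id' x).mul_const a).add_const b
  refine (((hasDerivAt_id' x).mul_const c).fun_div hden hx).congr_deriv ?_
  ring

theorem deriv_mul_div_linear_eventuallyEq (hx : x * a + b ≠ 0) :
    deriv (fun y => y * c / (y * a + b)) =ᶠ[𝓝 x] fun y => b * c / (y * a + b) ^ 2 := by
  have hcont : Continuous fun y : 𝕜 => y * a + b := by fun_prop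
  filter_upwards [hcont.continuousAt.eventually_ne hx] with y hy
  exact (hasDerivAt_mul_div_linear hy).deriv

theorem deriv_deriv_mul_div_linear (hx : x * a + b ≠ 0) :
    deriv (deriv fun y => y * c / (y * a + b)) x = -(2 * a * b * c) / (x * a + b) ^ 3 := by
  have hden : HasDerivAt (fun y => (y * a + b) ^ 2) (2 * (x * a + b) ^ 1 * a) x := by
    simpa using (((hasDerivAt_id' x).mul_const a).add_const b).fun_pow 2
  rw [(deriv_mul_div_linear_eventuallyEq hx).deriv_eq,
    ((hasDerivAt_const x (b * c)).fun_div hden (pow_ne_zero 2 hx)).deriv]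
  field_simp
  ring

end LinearFractional

theorem stmt_6_general (mu f f' r lam : ℝ)
    (hmu : 0 < mu) (hr1 : f' < r) (hr2 : r < f)
    (hstab : lam * (r - f') + mu * (r - f) < 0) :
    0 < deriv (deriv (fun l : ℝ =>
      (l / mu) * ((r - f') * (f' - f)) / (l * (r - f') + mu * (r - f)))) lam := by
  have hfun : (fun l : ℝ => (l / mu) * ((r - f') * (f' - f)) / (l * (r - f') + mu * (r - f)))
      = fun l => l * ((r - f') * (f' - f) / mu) / (l * (r - f') + mu * (r - f)) := by
    funext l
    ring
  rw [hfun, deriv_deriv_mul_div_linear hstab.ne]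
  have hcoef : mu * (r - f) * ((r - f') * (f' - f) / mu) = (r - f') * ((r - f) * (f' - f)) := by
    field_simp
  have hprod : 0 < (r - f') * (mu * (r - f)) * ((r - f') * (f' - f) / mu) := by
    rw [mul_assoc, hcoef]
    exact mul_pos (by linarith)
      (mul_pos (by linarith) (mul_pos_of_neg_of_neg (by linarith) (by linarith)))
  exact div_pos_of_neg_of_neg (by linarith) (Odd.pow_neg (by decide) hstab)

/-- X̄ is strictly convex in λ on the stable region: ∂²X̄/∂λ² > 0. -/
theorem stmt_6 (mu f f' r lam : ℝ)
    (hmu : 0 < mu) (hf' : 0 ≤ f') (hr1 : f' < r) (hr2 : r < f)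
    (hlam : 0 < lam) (hstab : lam * (r - f') + mu * (r - f) < 0) :
    0 < deriv (deriv (fun l : ℝ =>
      (l / mu) * ((r - f') * (f' - f)) / (l * (r - f') + mu * (r - f)))) lam :=
  stmt_6_general mu f f' r lam hmu hr1 hr2 hstab
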